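/- Let g ∈ ℝ^d, let ‖·‖_(1), …, ‖·‖_(k) be norms on ℝ^d, let x0 ∈ ℝ^d with ‖x0‖_(i) ≠ 0 for all i, and let μ*_i := 1/‖x0‖_(i) be the optimal weights, so that ‖x0‖_max,μ* = 1. Then dist(g, cone ∂‖·‖_max,μ*(x0)) = min over τ_1, …, τ_k ≥ 0 and x_1, …, x_k ∈ ℝ^d of ‖g − Σ_{i=1}^k x_i‖₂ subject to ⟨x_i, x0⟩ = τ_i·‖x0‖_max,μ* and ‖x_i‖_(i)° ≤ τ_i·μ*_i for all i ∈ [k]. -/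

import Mathlib

/-!
Write `F x = maxᵢ f i x / f i x0`, a norm with `F x0 = 1`; then `y ∈ ∂F(x0)` iff
`⟪y, x0⟫ = 1` and `⟪y, ·⟫ ≤ F`. Separating `y` from the compact convex set of sums `∑ uᵢ`
with `∑ f i x0 · (f i)°(uᵢ) ≤ 1` (the separating direction is then tested against norming
functionals of the `f i`) shows that `y` is such a sum. Since `⟪uᵢ, x0⟫ ≤ f i x0 · (f i)°(uᵢ)`,
where the left sides sum to `1` and the right sides to at most `1`, each inequality is an
equality: these are the constraints of the right-hand side with `τᵢ = f i x0 · (f i)°(uᵢ)`. Conversely a feasible `∑ xᵢ` is `∑ τᵢ` times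
an element of `∂F(x0)`, or `0` when all `τᵢ` vanish, and `0` lies in the closure of the cone.
So the cone and the feasible sums have the same closure, hence the same distance to `g`.
-/

open MeasureTheory ProbabilityTheory
open scoped RealInnerProductSpace BigOperators Pointwise

noncomputable section

/-- Euclidean space `ℝ^d`. -/
abbrev E (d : ℕ) := EuclideanSpace ℝ (Fin d)

/-- `f` is a norm on `ℝ^d`. -/
def IsNorm {d : ℕ} (f : E d → ℝ) : Prop :=
  (∀ x y, f (x + y) ≤ f x + f y) ∧ (∀ (a : ℝ) (x : E d), f (a • x) = |a| * f x) ∧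
    (∀ x, x ≠ 0 → 0 < f x)

/-- The cone generated by a set: `cone S = {τ x : x ∈ S, τ > 0}`. -/
def posCone {d : ℕ} (S : Set (E d)) : Set (E d) := {x | ∃ τ : ℝ, 0 < τ ∧ ∃ s ∈ S, x = τ • s}

/-- The dual norm `f°(y) = sup {⟨x, y⟩ : f(x) ≤ 1}`. -/
def dualNorm {d : ℕ} (f : E d → ℝ) (y : E d) : ℝ := sSup ((fun x => ⟪x, y⟫) '' {x | f x ≤ 1})

/-- The subdifferential of a convex function `f` at `x`. -/
def subdiff {d : ℕ} (f : E d → ℝ) (x : E d) : Set (E d) :=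
  {y | ∀ z, f x + ⟪y, z - x⟫ ≤ f z}

/-- The circular cone with axis `x` and angle `θ`:
`circ(x, θ) = {z : ⟨z, x⟩ ≥ cos(θ) ‖z‖₂ ‖x‖₂}`. -/
def circCone {d : ℕ} (x : E d) (θ : ℝ) : Set (E d) :=
  {z | Real.cos θ * (‖z‖ * ‖x‖) ≤ ⟪z, x⟫}

/-- The descent cone of `f` at `x`. -/
def descentCone {d : ℕ} (f : E d → ℝ) (x : E d) : Set (E d) := posCone {y | f (x + y) ≤ f x}

/-- The polar of a cone. -/
def polarCone {d : ℕ} (K : Set (E d)) : Set (E d) := {y | ∀ x ∈ K, ⟪y, x⟫ ≤ 0}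

/-- The standard Gaussian measure `N(0, Id_d)` on `ℝ^d`. -/
def stdGaussian (d : ℕ) : Measure (E d) :=
  (Measure.pi fun _ : Fin d => gaussianReal 0 1).map (MeasurableEquiv.toLp 2 (Fin d → ℝ))

/-- The statistical dimension of a cone `K ⊆ ℝ^d`:  `δ(K) = E_g[dist(g, K°)²]`. -/
def statDim {d : ℕ} (K : Set (E d)) : ℝ :=
  ∫ g, (Metric.infDist g (polarCone K))^2 ∂(stdGaussian d)

lemma exists_inner_eq_linearMap {d : ℕ} (ℓ : E d →ₗ[ℝ] ℝ) : ∃ w : E d, ∀ z, ⟪w, z⟫ = ℓ z :=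
  ⟨(InnerProductSpace.toDual ℝ (E d)).symm (LinearMap.toContinuousLinearMap ℓ),
    fun _ => InnerProductSpace.toDual_symm_apply⟩

namespace IsNorm

variable {d : ℕ} {f : E d → ℝ}

lemma map_zero (hf : IsNorm f) : f 0 = 0 := by
  simpa using hf.2.1 0 0

lemma nonneg (hf : IsNorm f) (x : E d) : 0 ≤ f x := by
  rcases eq_or_ne x 0 with rfl | hx
  · exact hf.map_zero.ge
  · exact (hf.2.2 x hx).le

lemma eq_zero_of_le_zero (hf : IsNorm f) {x : E d} (hx : f x ≤ 0) : x = 0 := by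
  by_contra h
  exact (hf.2.2 x h).not_ge hx

lemma map_smul_of_nonneg (hf : IsNorm f) {a : ℝ} (ha : 0 ≤ a) (x : E d) :
    f (a • x) = a * f x := by
  rw [hf.2.1, abs_of_nonneg ha]

lemma convexOn (hf : IsNorm f) : ConvexOn ℝ Set.univ f :=
  ⟨convex_univ, fun x _ y _ a b ha hb _ => by
    simpa only [smul_eq_mul, hf.map_smul_of_nonneg ha, hf.map_smul_of_nonneg hb]
      using hf.1 (a • x) (b • y)⟩

lemma continuous (hf : IsNorm f) : Continuous f :=
  continuousOn_univ.1 (hf.convexOn.continuousOn isOpen_univ)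

lemma exists_pos_mul_norm_le (hf : IsNorm f) : ∃ c > 0, ∀ x, c * ‖x‖ ≤ f x := by
  have of_sphere : ∀ c, (∀ y ∈ Metric.sphere (0 : E d) 1, c ≤ f y) → ∀ x, c * ‖x‖ ≤ f x := by
    intro c hc x
    rcases eq_or_ne x 0 with rfl | hx
    · simp [hf.map_zero]
    have hnx : 0 < ‖x‖ := norm_pos_iff.2 hx
    have := hc (‖x‖⁻¹ • x) (by simp [norm_smul, hnx.ne'])
    rw [hf.map_smul_of_nonneg (inv_nonneg.2 hnx.le), le_inv_mul_iff₀ hnx] at this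
    linarith
  rcases (Metric.sphere (0 : E d) 1).eq_empty_or_nonempty with hS | hS
  · exact ⟨1, one_pos, of_sphere 1 (by simp [hS])⟩
  obtain ⟨z, hz, hmin⟩ :=
    (isCompact_sphere (0 : E d) 1).exists_isMinOn hS hf.continuous.continuousOn
  have hz0 : z ≠ 0 := ne_zero_of_mem_unit_sphere ⟨z, hz⟩
  exact ⟨f z, hf.2.2 z hz0, of_sphere (f z) fun y hy => hmin hy⟩

lemma bddAbove_inner (hf : IsNorm f) (y : E d) :
    BddAbove ((fun x => ⟪x, y⟫) '' {x | f x ≤ 1}) := by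
  obtain ⟨c, hc, hle⟩ := hf.exists_pos_mul_norm_le
  refine ⟨c⁻¹ * ‖y‖, ?_⟩
  rintro _ ⟨x, hx, rfl⟩
  have hx' : ‖x‖ ≤ c⁻¹ := by
    rw [← one_div, le_div_iff₀ hc, mul_comm]
    exact (hle x).trans hx
  exact (real_inner_le_norm x y).trans (mul_le_mul_of_nonneg_right hx' (norm_nonneg y))

lemma inner_le_dualNorm (hf : IsNorm f) {x y : E d} (hx : f x ≤ 1) : ⟪x, y⟫ ≤ dualNorm f y :=
  le_csSup (hf.bddAbove_inner y) ⟨x, hx, rfl⟩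

lemma dualNorm_le (hf : IsNorm f) {y : E d} {c : ℝ} (h : ∀ x, f x ≤ 1 → ⟪x, y⟫ ≤ c) :
    dualNorm f y ≤ c :=
  csSup_le ⟨0, 0, by simp [hf.map_zero]⟩ (by rintro _ ⟨x, hx, rfl⟩; exact h x hx)

lemma inner_le_mul_dualNorm (hf : IsNorm f) (x y : E d) : ⟪x, y⟫ ≤ f x * dualNorm f y := by
  rcases eq_or_ne x 0 with rfl | hx
  · simp [hf.map_zero]
  have hfx := hf.2.2 x hx
  have := hf.inner_le_dualNorm (y := y) (x := (f x)⁻¹ • x)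
    (by rw [hf.map_smul_of_nonneg (inv_nonneg.2 hfx.le), inv_mul_cancel₀ hfx.ne'])
  rwa [real_inner_smul_left, inv_mul_le_iff₀ hfx] at this

lemma abs_inner_le_dualNorm (hf : IsNorm f) {x y : E d} (hx : f x ≤ 1) :
    |⟪x, y⟫| ≤ dualNorm f y := by
  have hneg : f (-x) ≤ 1 := by rw [← neg_one_smul ℝ x, hf.2.1]; simpa using hx
  have := hf.inner_le_dualNorm (y := y) hneg
  rw [inner_neg_left] at this
  exact abs_le.2 ⟨by linarith, hf.inner_le_dualNorm hx⟩

lemma dualNorm_nonneg (hf : IsNorm f) (y : E d) : 0 ≤ dualNorm f y := by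
  simpa using hf.inner_le_dualNorm (x := 0) (y := y) (by simp [hf.map_zero])

lemma dualNorm_smul_le (hf : IsNorm f) (r : ℝ) (y : E d) :
    dualNorm f (r • y) ≤ |r| * dualNorm f y :=
  hf.dualNorm_le fun x hx => by
    rw [real_inner_smul_right]
    calc r * ⟪x, y⟫ ≤ |r * ⟪x, y⟫| := le_abs_self _
      _ = |r| * |⟪x, y⟫| := abs_mul _ _
      _ ≤ |r| * dualNorm f y :=
        mul_le_mul_of_nonneg_left (hf.abs_inner_le_dualNorm hx) (abs_nonneg r)

lemma dualNorm_add_le (hf : IsNorm f) (y z : E d) :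
    dualNorm f (y + z) ≤ dualNorm f y + dualNorm f z :=
  hf.dualNorm_le fun x hx => by
    rw [inner_add_right]
    exact add_le_add (hf.inner_le_dualNorm hx) (hf.inner_le_dualNorm hx)

lemma dualNorm_pos (hf : IsNorm f) {y : E d} (hy : y ≠ 0) : 0 < dualNorm f y := by
  have hfy := hf.2.2 y hy
  have := hf.inner_le_dualNorm (y := y) (x := (f y)⁻¹ • y)
    (by rw [hf.map_smul_of_nonneg (inv_nonneg.2 hfy.le), inv_mul_cancel₀ hfy.ne'])
  rw [real_inner_smul_left, real_inner_self_eq_norm_sq] at this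
  exact this.trans_lt' (by have := norm_pos_iff.2 hy; positivity)

lemma isNorm_dualNorm (hf : IsNorm f) : IsNorm (dualNorm f) := by
  have hzero : dualNorm f 0 = 0 :=
    le_antisymm (by simpa using hf.dualNorm_smul_le 0 0) (hf.dualNorm_nonneg 0)
  let p : Seminorm ℝ (E d) := .ofSMulLE (dualNorm f) hzero hf.dualNorm_add_le
    fun r y => by simpa only [Real.norm_eq_abs] using hf.dualNorm_smul_le r y
  exact ⟨hf.dualNorm_add_le, fun a y => map_smul_eq_mul p a y,
    fun y hy => hf.dualNorm_pos hy⟩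

lemma mem_subdiff_iff (hf : IsNorm f) {x y : E d} :
    y ∈ subdiff f x ↔ ⟪y, x⟫ = f x ∧ ∀ z, ⟪y, z⟫ ≤ f z := by
  refine ⟨fun hy => ?_, fun ⟨hx, hz⟩ z => by linarith [hz z, inner_sub_right (𝕜 := ℝ) y z x]⟩
  have h0 := hy 0
  have h2 := hy ((2 : ℝ) • x)
  rw [hf.map_zero, zero_sub, inner_neg_right] at h0
  rw [hf.map_smul_of_nonneg zero_le_two, two_smul, add_sub_cancel_right] at h2
  have hx : ⟪y, x⟫ = f x := by linarith
  exact ⟨hx, fun z => by linarith [hy z, inner_sub_right (𝕜 := ℝ) y z x]⟩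

-- Hahn–Banach: extend `t • x ↦ t * f x` from `ℝ ∙ x` to a linear form dominated by `f`.
lemma subdiff_nonempty (hf : IsNorm f) (x : E d) : (subdiff f x).Nonempty := by
  have hker : ∀ c : ℝ, c • x = 0 → c • f x = 0 := fun c hc => by
    have := hf.2.1 c x
    rw [hc, hf.map_zero] at this
    rcases mul_eq_zero.1 this.symm with h | h
    · simp [abs_eq_zero.1 h]
    · simp [h]
  obtain ⟨ℓ, hℓx, hℓf⟩ := exists_extension_of_le_sublinear (.mkSpanSingleton' x (f x) hker) f
    (fun c hc y => hf.map_smul_of_nonneg hc.le y) hf.1 (by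
      rintro ⟨_, hy⟩
      obtain ⟨c, rfl⟩ := Submodule.mem_span_singleton.1 hy
      rw [LinearPMap.mkSpanSingleton'_apply, hf.2.1, smul_eq_mul]
      exact mul_le_mul_of_nonneg_right (le_abs_self c) (hf.nonneg x))
  obtain ⟨w, hw⟩ := exists_inner_eq_linearMap ℓ
  refine ⟨w, hf.mem_subdiff_iff.2 ⟨?_, fun z => (hw z).trans_le (hℓf z)⟩⟩
  rw [hw, hℓx ⟨x, Submodule.mem_span_singleton_self x⟩]
  exact LinearPMap.mkSpanSingleton'_apply_self _ _ _ _

end IsNorm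

section WeightedMax

variable {d : ℕ} {ι : Type*} [Fintype ι] {f : ι → E d → ℝ} {c : ι → ℝ}

lemma isNorm_iSup_div [Nonempty ι] (hf : ∀ i, IsNorm (f i)) (hc : ∀ i, 0 < c i) :
    IsNorm (fun x => ⨆ i, f i x / c i) := by
  refine ⟨fun x y => ciSup_le fun i => ?_, fun a x => ?_, fun x hx => ?_⟩
  · calc f i (x + y) / c i ≤ f i x / c i + f i y / c i := by
          rw [← add_div]; exact div_le_div_of_nonneg_right ((hf i).1 x y) (hc i).le
      _ ≤ _ := add_le_add (le_ciSup (f := fun i => f i x / c i) (Finite.bddAbove_range _) i)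
          (le_ciSup (f := fun i => f i y / c i) (Finite.bddAbove_range _) i)
  · simp_rw [(hf _).2.1, mul_div_assoc]
    exact (Real.mul_iSup_of_nonneg (abs_nonneg a) _).symm
  · obtain ⟨i⟩ := ‹Nonempty ι›
    exact (div_pos ((hf i).2.2 x hx) (hc i)).trans_le
      (le_ciSup (f := fun i => f i x / c i) (Finite.bddAbove_range _) i)

lemma convex_setOf_sum_mul_dualNorm_le (hf : ∀ i, IsNorm (f i)) (hc : ∀ i, 0 ≤ c i) :
    Convex ℝ {u : ι → E d | ∑ i, c i * dualNorm (f i) (u i) ≤ 1} := by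
  intro u hu v hv a b ha hb hab
  calc ∑ i, c i * dualNorm (f i) ((a • u + b • v) i)
      ≤ ∑ i, (a * (c i * dualNorm (f i) (u i)) + b * (c i * dualNorm (f i) (v i))) := by
        refine Finset.sum_le_sum fun i _ => ?_
        have := ((hf i).isNorm_dualNorm.convexOn.2 (Set.mem_univ (u i)) (Set.mem_univ (v i))
          ha hb hab)
        simp only [smul_eq_mul] at this
        simp only [Pi.add_apply, Pi.smul_apply]
        nlinarith [hc i]
    _ = a * ∑ i, c i * dualNorm (f i) (u i) + b * ∑ i, c i * dualNorm (f i) (v i) := by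
        rw [Finset.sum_add_distrib, Finset.mul_sum, Finset.mul_sum]
    _ ≤ 1 := by nlinarith [hu.out, hv.out]

lemma isCompact_setOf_sum_mul_dualNorm_le (hf : ∀ i, IsNorm (f i)) (hc : ∀ i, 0 < c i) :
    IsCompact {u : ι → E d | ∑ i, c i * dualNorm (f i) (u i) ≤ 1} := by
  choose m hm hle using fun i => (hf i).isNorm_dualNorm.exists_pos_mul_norm_le
  refine (isCompact_univ_pi fun i => isCompact_closedBall 0 (c i * m i)⁻¹).of_isClosed_subset
    (isClosed_le (continuous_finsetSum _ fun i _ => continuous_const.mul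
      ((hf i).isNorm_dualNorm.continuous.comp (continuous_apply i))) continuous_const) ?_
  intro u hu i _
  have hterm : c i * dualNorm (f i) (u i) ≤ 1 := (Finset.single_le_sum (fun j _ =>
    mul_nonneg (hc j).le ((hf j).dualNorm_nonneg (u j))) (Finset.mem_univ i)).trans hu
  rw [mem_closedBall_zero_iff, ← one_div, le_div_iff₀ (mul_pos (hc i) (hm i))]
  nlinarith [mul_le_mul_of_nonneg_left (hle i (u i)) (hc i).le]

lemma exists_sum_eq_of_inner_le_iSup (hf : ∀ i, IsNorm (f i)) (hc : ∀ i, 0 < c i) {s : E d}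
    (hs : ∀ z, ⟪s, z⟫ ≤ ⨆ i, f i z / c i) :
    ∃ u : ι → E d, s = ∑ i, u i ∧ ∑ i, c i * dualNorm (f i) (u i) ≤ 1 := by
  classical
  set K := {u : ι → E d | ∑ i, c i * dualNorm (f i) (u i) ≤ 1}
  suffices s ∈ (fun u => ∑ i, u i) '' K by
    obtain ⟨u, hu, rfl⟩ := this
    exact ⟨u, rfl, hu⟩
  by_contra hsK
  have hsum_lin : IsLinearMap ℝ fun u : ι → E d => ∑ i, u i :=
    ⟨fun u v => Finset.sum_add_distrib, fun a u => by simp [Finset.smul_sum]⟩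
  obtain ⟨φ, r, hφK, hrs⟩ := geometric_hahn_banach_closed_point
    ((convex_setOf_sum_mul_dualNorm_le hf fun i => (hc i).le).is_linear_image hsum_lin)
    ((isCompact_setOf_sum_mul_dualNorm_le hf hc).image
      (continuous_finsetSum _ fun i _ => continuous_apply i)).isClosed hsK
  obtain ⟨v, hv⟩ := exists_inner_eq_linearMap (φ : E d →ₗ[ℝ] ℝ)
  have hr : 0 < r := by
    simpa using hφK 0 ⟨0, by simp [fun i => (hf i).isNorm_dualNorm.map_zero], by simp⟩
  have hfv : ∀ i, f i v / c i < r := by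
    intro i
    obtain ⟨w, hw⟩ := (hf i).subdiff_nonempty v
    obtain ⟨hwv, hwf⟩ := (hf i).mem_subdiff_iff.1 hw
    have hwK : ∑ j, c j * dualNorm (f j) ((Pi.single i ((c i)⁻¹ • w) : ι → E d) j) ≤ 1 := by
      rw [Finset.sum_eq_single i (fun j _ hj => by
          simp [hj, (hf j).isNorm_dualNorm.map_zero]) (by simp),
        Pi.single_eq_same, (hf i).isNorm_dualNorm.map_smul_of_nonneg (inv_nonneg.2 (hc i).le),
        mul_inv_cancel_left₀ (hc i).ne']
      refine (hf i).dualNorm_le fun z hz => ?_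
      rw [real_inner_comm]
      exact (hwf z).trans hz
    have := hφK _ ⟨_, hwK, rfl⟩
    simp only [Fintype.sum_pi_single', map_smul] at this
    rwa [← ContinuousLinearMap.coe_coe, ← hv, real_inner_comm, hwv, smul_eq_mul,
      inv_mul_eq_div] at this
  have := hs v
  rw [real_inner_comm, hv, ContinuousLinearMap.coe_coe] at this
  linarith [Real.iSup_le (fun i => (hfv i).le) hr.le]

lemma inner_eq_mul_dualNorm_of_sum_le (hf : ∀ i, IsNorm (f i)) {x0 : E d} {u : ι → E d}
    (h : ∑ i, f i x0 * dualNorm (f i) (u i) ≤ ⟪∑ i, u i, x0⟫) (i : ι) :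
    ⟪u i, x0⟫ = f i x0 * dualNorm (f i) (u i) := by
  have hle : ∀ i ∈ Finset.univ, ⟪u i, x0⟫ ≤ f i x0 * dualNorm (f i) (u i) := fun i _ =>
    real_inner_comm x0 (u i) ▸ (hf i).inner_le_mul_dualNorm x0 (u i)
  rw [sum_inner] at h
  exact (Finset.sum_eq_sum_iff_of_le hle).1 (le_antisymm (Finset.sum_le_sum hle) h) i
    (Finset.mem_univ i)

end WeightedMax

lemma Metric.infDist_eq_of_subset_of_subset_closure {α : Type*} [PseudoMetricSpace α]
    {A S : Set α} (x : α) (hAS : A ⊆ S) (hSA : S ⊆ closure A) (hA : A.Nonempty) :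
    Metric.infDist x A = Metric.infDist x S :=
  le_antisymm
    (Metric.infDist_closure (x := x) ▸ Metric.infDist_le_infDist_of_subset hSA (hA.mono hAS))
    (Metric.infDist_le_infDist_of_subset hAS hA)

lemma zero_mem_closure_posCone {d : ℕ} {S : Set (E d)} (hS : S.Nonempty) :
    0 ∈ closure (posCone S) := by
  obtain ⟨s, hs⟩ := hS
  have hcont : Continuous fun t : ℝ => t • s := continuous_id.smul continuous_const
  have : Filter.Tendsto (fun t : ℝ => t • s) (nhdsWithin 0 (Set.Ioi 0)) (nhds 0) := by
    simpa using (hcont.tendsto 0).mono_left nhdsWithin_le_nhds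
  exact mem_closure_of_tendsto this
    (eventually_mem_nhdsWithin.mono fun t ht => ⟨t, ht, s, hs, rfl⟩)

section ConeOfSubdiff

variable {d : ℕ} {ι : Type*} [Fintype ι] {f : ι → E d → ℝ} {x0 : E d}

def feasibleSums (f : ι → E d → ℝ) (x0 : E d) : Set (E d) :=
  {v | ∃ τ : ι → ℝ, (∀ i, 0 ≤ τ i) ∧ ∃ x : ι → E d, v = ∑ i, x i ∧
    (∀ i, ⟪x i, x0⟫ = τ i * (⨆ j, f j x0 / f j x0)) ∧
    ∀ i, dualNorm (f i) (x i) ≤ τ i * (1 / f i x0)}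

lemma posCone_subdiff_subset_feasibleSums [Nonempty ι] (hf : ∀ i, IsNorm (f i))
    (hx0 : ∀ i, 0 < f i x0) :
    posCone (subdiff (fun x => ⨆ i, f i x / f i x0) x0) ⊆ feasibleSums f x0 := by
  have hF1 : (⨆ j, f j x0 / f j x0) = 1 := by simp [div_self (hx0 _).ne']
  rintro _ ⟨τ, hτ, s, hs, rfl⟩
  obtain ⟨hsx0, hsF⟩ := (isNorm_iSup_div hf hx0).mem_subdiff_iff.1 hs
  obtain ⟨u, rfl, hu⟩ := exists_sum_eq_of_inner_le_iSup hf hx0 hsF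
  have hforce := inner_eq_mul_dualNorm_of_sum_le hf (hu.trans (hsx0.trans hF1).ge)
  refine ⟨fun i => τ * (f i x0 * dualNorm (f i) (u i)),
    fun i => mul_nonneg hτ.le (mul_nonneg (hx0 i).le ((hf i).dualNorm_nonneg _)),
    fun i => τ • u i, Finset.smul_sum, fun i => ?_, fun i => ?_⟩
  · rw [hF1, mul_one, real_inner_smul_left, hforce i]
  · dsimp only
    rw [(hf i).isNorm_dualNorm.map_smul_of_nonneg hτ.le, mul_one_div, mul_left_comm,
      mul_div_cancel_left₀ _ (hx0 i).ne']

lemma feasibleSums_subset_closure_posCone_subdiff [Nonempty ι] (hf : ∀ i, IsNorm (f i))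
    (hx0 : ∀ i, 0 < f i x0) :
    feasibleSums f x0 ⊆ closure (posCone (subdiff (fun x => ⨆ i, f i x / f i x0) x0)) := by
  have hF := isNorm_iSup_div hf hx0
  rintro _ ⟨τ, hτ, x, rfl, hxx0, hxf⟩
  rcases (Finset.sum_nonneg fun i _ => hτ i).eq_or_lt with hσ | hσ
  · have hx : ∀ i, x i = 0 := fun i => by
      have hτi : τ i = 0 :=
        (Finset.sum_eq_zero_iff_of_nonneg fun i _ => hτ i).1 hσ.symm i (Finset.mem_univ i)
      exact (hf i).isNorm_dualNorm.eq_zero_of_le_zero (by simpa [hτi] using hxf i)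
    simpa [hx] using zero_mem_closure_posCone (hF.subdiff_nonempty x0)
  have hxz : ∀ i z, ⟪x i, z⟫ ≤ τ i * ⨆ j, f j z / f j x0 := fun i z => calc
    ⟪x i, z⟫ ≤ f i z * dualNorm (f i) (x i) :=
      real_inner_comm z (x i) ▸ (hf i).inner_le_mul_dualNorm z (x i)
    _ ≤ f i z * (τ i * (1 / f i x0)) := mul_le_mul_of_nonneg_left (hxf i) ((hf i).nonneg z)
    _ = τ i * (f i z / f i x0) := by ring
    _ ≤ _ := mul_le_mul_of_nonneg_left
      (le_ciSup (f := fun j => f j z / f j x0) (Finite.bddAbove_range _) i) (hτ i)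
  refine subset_closure ⟨∑ i, τ i, hσ, (∑ i, τ i)⁻¹ • ∑ i, x i,
    hF.mem_subdiff_iff.2 ⟨?_, fun z => ?_⟩, (smul_inv_smul₀ hσ.ne' _).symm⟩
  · rw [real_inner_smul_left, sum_inner, Finset.sum_congr rfl fun i _ => hxx0 i,
      ← Finset.sum_mul, inv_mul_cancel_left₀ hσ.ne']
  · rw [real_inner_smul_left, sum_inner, inv_mul_le_iff₀ hσ, Finset.sum_mul]
    exact Finset.sum_le_sum fun i _ => hxz i z

end ConeOfSubdiff

/-- For `g ∈ ℝ^d` and optimal weights `μ*_i = 1/‖x0‖_(i)`, the Euclidean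
distance of `g` to the cone generated by the subdifferential of the optimally weighted max
norm at `x0` equals the minimum of `‖g − Σ_i x_i‖₂` over `τ_1, …, τ_k ≥ 0` and
`x_1, …, x_k` subject to `⟨x_i, x0⟩ = τ_i ‖x0‖_max,μ*` and `‖x_i‖_(i)° ≤ τ_i μ*_i`. -/
theorem infDist_coneSubdiff_optMax_eq {d k : ℕ} (hk : 0 < k) (g : E d)
    (f : Fin k → E d → ℝ) (hf : ∀ i, IsNorm (f i))
    (x0 : E d) (hx0 : ∀ i, f i x0 ≠ 0) :
    Metric.infDist g (posCone (subdiff (fun x => ⨆ i, f i x / f i x0) x0)) =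
      sInf {t : ℝ | ∃ τ : Fin k → ℝ, (∀ i, 0 ≤ τ i) ∧ ∃ x : Fin k → E d,
        t = ‖g - ∑ i, x i‖ ∧
        (∀ i, ⟪x i, x0⟫ = τ i * (⨆ j, f j x0 / f j x0)) ∧
        ∀ i, dualNorm (f i) (x i) ≤ τ i * (1 / f i x0)} := by
  have : Nonempty (Fin k) := ⟨⟨0, hk⟩⟩
  have hx0' : ∀ i, 0 < f i x0 := fun i => ((hf i).nonneg x0).lt_of_ne' (hx0 i)
  obtain ⟨s, hs⟩ := (isNorm_iSup_div hf hx0').subdiff_nonempty x0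
  rw [Metric.infDist_eq_of_subset_of_subset_closure g
      (posCone_subdiff_subset_feasibleSums hf hx0')
      (feasibleSums_subset_closure_posCone_subdiff hf hx0')
      ⟨s, 1, one_pos, s, hs, (one_smul ℝ s).symm⟩,
    Metric.infDist_eq_iInf, ← sInf_image']
  congr 1
  ext t
  constructor
  · rintro ⟨v, ⟨τ, hτ, x, rfl, hxx0, hxf⟩, rfl⟩
    exact ⟨τ, hτ, x, dist_eq_norm _ _, hxx0, hxf⟩
  · rintro ⟨τ, hτ, x, rfl, hxx0, hxf⟩
    exact ⟨_, ⟨τ, hτ, x, rfl, hxx0, hxf⟩, dist_eq_norm _ _⟩
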